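/- Let K be a field and A a K-algebra possessing a K-basis given by a subset Σ of A. Suppose that for every real number p > 1 and every finite subset K' of Σ, there is a finite subset F of Σ such that |K'F \ {0}| < p·|F|, where K'F = {kf : k ∈ K', f ∈ F}. Then A is amenable. -/

import Mathlib

open Pointwise

/-- A `K`-algebra `A` is amenable if for every finite-dimensional `K`-subspace `U` of `A`
and every real `p > 1` there exists a finite-dimensional `K`-subspace `V` of `A` with
`dim_K (U*V) < p * dim_K V`.  Here `U*V` denotes the `K`-span of all products `u * v`
with `u ∈ U`, `v ∈ V`. -/
def IsAmenableAlgebra (K A : Type*) [Field K] [Ring A] [Algebra K A] : Prop :=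
  ∀ U : Submodule K A, FiniteDimensional K U →
    ∀ p : ℝ, 1 < p →
      ∃ V : Submodule K A, FiniteDimensional K V ∧
        (Module.finrank K ↥(U * V) : ℝ) < p * (Module.finrank K ↥V : ℝ)

/-!
Choose a finite `K' ⊆ Σ` whose span contains `U` and let `F ⊆ Σ` be the Følner set given by
the hypothesis for `K'`. Then `V = span F` has dimension `|F|`, since `Σ` is linearly
independent, while `U V ⊆ span (K' F) = span (K' F \ {0})` has dimension at most
`|K' F \ {0}| < p |F|`.
-/

open Module Submodule

theorem finrank_span_le_ncard {R M : Type*} [Ring R] [StrongRankCondition R] [AddCommGroup M]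
    [Module R M] {s : Set M} (hs : s.Finite) : finrank R (span R s) ≤ s.ncard := by
  obtain ⟨t, rfl⟩ := hs.exists_finset_coe
  rw [Set.ncard_coe_finset]
  exact finrank_span_finset_le_card t

theorem finrank_mul_span_le_ncard_mul_sdiff_zero {K A : Type*} [Field K] [Ring A] [Algebra K A]
    {U : Submodule K A} {s t : Set A} (hU : U ≤ span K s) (hs : s.Finite) (ht : t.Finite) :
    finrank K ↥(U * span K t) ≤ ((s * t) \ {0}).ncard := by
  have hfin : ((s * t) \ {0}).Finite := (hs.mul ht).sdiff
  have : FiniteDimensional K (span K ((s * t) \ {0})) := FiniteDimensional.span_of_finite K hfin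
  calc finrank K ↥(U * span K t) ≤ finrank K (span K ((s * t) \ {0})) := by
        apply Submodule.finrank_mono
        rw [span_sdiff_singleton_zero, ← span_mul_span]
        exact mul_le_mul_left hU _
    _ ≤ ((s * t) \ {0}).ncard := finrank_span_le_ncard hfin

/-- Let `K` be a field and `A` a `K`-algebra with a `K`-basis given by a subset
`Sgm ⊆ A`.  Suppose that for every real `p > 1` and every finite subset `K' ⊆ Sgm`
there is a finite subset `F ⊆ Sgm` such that `|K'F \ {0}| < p * |F|`, where
`K'F = {k * f : k ∈ K', f ∈ F}`.  Then `A` is amenable. -/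
theorem statement18 (K A : Type*) [Field K] [Ring A] [Algebra K A] (Sgm : Set A)
    (hbasis : LinearIndependent K ((↑) : Sgm → A) ∧ Submodule.span K Sgm = ⊤)
    (hcomb : ∀ p : ℝ, 1 < p → ∀ K' : Finset A, (K' : Set A) ⊆ Sgm →
      ∃ F : Finset A, (F : Set A) ⊆ Sgm ∧
        ((((K' : Set A) * (F : Set A)) \ {0}).ncard : ℝ) < p * F.card) :
    IsAmenableAlgebra K A := by
  obtain ⟨hli, hspan⟩ := hbasis
  intro U hU p hp
  obtain ⟨t, rfl⟩ := (fg_iff_finiteDimensional U).mpr hU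
  obtain ⟨K', hK'Sgm, htK'⟩ :=
    subset_span_finite_of_subset_span (s := Sgm) (t := t) (by rw [hspan]; exact Set.subset_univ _)
  obtain ⟨F, hFSgm, hF⟩ := hcomb p hp K' hK'Sgm
  refine ⟨span K F, inferInstance, ?_⟩
  have hFindep : LinearIndepOn K id (F : Set A) := LinearIndepOn.mono hli hFSgm
  rw [finrank_span_finset_eq_card hFindep]
  calc (finrank K ↥(span K (t : Set A) * span K (F : Set A)) : ℝ)
      ≤ (((K' : Set A) * F) \ {0}).ncard := by
        exact_mod_cast finrank_mul_span_le_ncard_mul_sdiff_zero (span_le.mpr htK')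
          K'.finite_toSet F.finite_toSet
    _ < p * F.card := hF
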